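/- The linear map Φ'(τ) := (1/2) Σ_{p∈{0,1}} Σ_{(x₁,x₂,x₃): x₁⊕x₂⊕x₃=p} Tr[ρ'_{x₁,x₂,x₃} τ] · ρ'_{x₁,x₂,x₃} on 4×4 matrices satisfies Φ'(I⊗I) = I⊗I and Φ'(P') = (2/3)P' for each P' ∈ {X', Y', Z'}. -/
import Mathlib


open Matrix Kronecker

noncomputable def PX : Matrix (Fin 2) (Fin 2) ℂ := !![0, 1; 1, 0]
noncomputable def PY : Matrix (Fin 2) (Fin 2) ℂ := !![0, -Complex.I; Complex.I, 0]
noncomputable def PZ : Matrix (Fin 2) (Fin 2) ℂ := !![1, 0; 0, -1]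
noncomputable def I2 : Matrix (Fin 2) (Fin 2) ℂ := 1

noncomputable def sgn (b : Bool) : ℂ := if b then -1 else 1

noncomputable def Xp : Matrix (Fin 2 × Fin 2) (Fin 2 × Fin 2) ℂ :=
  ((1 : ℂ)/(Real.sqrt 6 : ℂ)) •
    (((1 : ℂ)/2) • (PX ⊗ₖ PX) + ((1 : ℂ)/2) • (PX ⊗ₖ PZ) + PZ ⊗ₖ I2)
noncomputable def Yp : Matrix (Fin 2 × Fin 2) (Fin 2 × Fin 2) ℂ :=
  ((1 : ℂ)/(Real.sqrt 6 : ℂ)) •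
    (((1 : ℂ)/2) • (I2 ⊗ₖ PX) + I2 ⊗ₖ PZ + ((1 : ℂ)/2) • (PY ⊗ₖ PY))
noncomputable def Zp : Matrix (Fin 2 × Fin 2) (Fin 2 × Fin 2) ℂ :=
  ((1 : ℂ)/(Real.sqrt 6 : ℂ)) •
    (PZ ⊗ₖ PZ - ((1 : ℂ)/2) • (PX ⊗ₖ I2) - ((1 : ℂ)/2) • (PZ ⊗ₖ PX))

noncomputable def rho32 (x₁ x₂ x₃ : Bool) : Matrix (Fin 2 × Fin 2) (Fin 2 × Fin 2) ℂ :=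
  if (Bool.xor x₁ (Bool.xor x₂ x₃)) = false then
    ((1 : ℂ)/4) • (I2 ⊗ₖ I2) + ((1 : ℂ)/4) •
      (sgn x₁ • (PZ ⊗ₖ I2) + sgn x₂ • (I2 ⊗ₖ PZ) + sgn x₃ • (PZ ⊗ₖ PZ))
  else
    ((1 : ℂ)/4) • (I2 ⊗ₖ I2)
    + sgn x₁ • (((1 : ℂ)/12) • (PZ ⊗ₖ I2) + ((1 : ℂ)/6) • (PX ⊗ₖ PX) + ((1 : ℂ)/6) • (PX ⊗ₖ PZ))
    + sgn x₂ • (((1 : ℂ)/6) • (I2 ⊗ₖ PX) + ((1 : ℂ)/12) • (I2 ⊗ₖ PZ) + ((1 : ℂ)/6) • (PY ⊗ₖ PY))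
    + sgn x₃ • (((1 : ℂ)/12) • (PZ ⊗ₖ PZ) - ((1 : ℂ)/6) • (PX ⊗ₖ I2) - ((1 : ℂ)/6) • (PZ ⊗ₖ PX))

noncomputable def Phi' (τ : Matrix (Fin 2 × Fin 2) (Fin 2 × Fin 2) ℂ) :
    Matrix (Fin 2 × Fin 2) (Fin 2 × Fin 2) ℂ :=
  ((1 : ℂ)/2) • ∑ x : Bool × Bool × Bool,
    (rho32 x.1 x.2.1 x.2.2 * τ).trace • rho32 x.1 x.2.1 x.2.2

private lemma tPX : PX.trace = 0 := by simp [PX, Matrix.trace_fin_two]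
private lemma tPY : PY.trace = 0 := by simp [PY, Matrix.trace_fin_two]
private lemma tPZ : PZ.trace = 0 := by simp [PZ, Matrix.trace_fin_two]
private lemma tI2 : I2.trace = 2 := by simp [I2]
private lemma mXX : PX * PX = I2 := by ext i j; fin_cases i <;> fin_cases j <;> simp [PX, I2, Matrix.mul_apply, Fin.sum_univ_two, Matrix.one_apply]
private lemma mYY : PY * PY = I2 := by ext i j; fin_cases i <;> fin_cases j <;> simp [PY, I2, Matrix.mul_apply, Fin.sum_univ_two, Matrix.one_apply]
private lemma mZZ : PZ * PZ = I2 := by ext i j; fin_cases i <;> fin_cases j <;> simp [PZ, I2, Matrix.mul_apply, Fin.sum_univ_two, Matrix.one_apply]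
private lemma mI2l (A : Matrix (Fin 2) (Fin 2) ℂ) : I2 * A = A := by simp [I2]
private lemma mI2r (A : Matrix (Fin 2) (Fin 2) ℂ) : A * I2 = A := by simp [I2]
private lemma tXY : (PX * PY).trace = 0 := by simp [PX, PY, Matrix.trace_fin_two, Matrix.mul_apply, Fin.sum_univ_two]
private lemma tYX : (PY * PX).trace = 0 := by simp [PX, PY, Matrix.trace_fin_two, Matrix.mul_apply, Fin.sum_univ_two]
private lemma tXZ : (PX * PZ).trace = 0 := by simp [PX, PZ, Matrix.trace_fin_two, Matrix.mul_apply, Fin.sum_univ_two]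
private lemma tZX : (PZ * PX).trace = 0 := by simp [PX, PZ, Matrix.trace_fin_two, Matrix.mul_apply, Fin.sum_univ_two]
private lemma tYZ : (PY * PZ).trace = 0 := by simp [PY, PZ, Matrix.trace_fin_two, Matrix.mul_apply, Fin.sum_univ_two]
private lemma tZY : (PZ * PY).trace = 0 := by simp [PY, PZ, Matrix.trace_fin_two, Matrix.mul_apply, Fin.sum_univ_two]

attribute [local simp] tPX tPY tPZ tI2 mXX mYY mZZ mI2l mI2r tXY tYX tXZ tZX tYZ tZY

set_option maxHeartbeats 1000000 in
private lemma trI (x₁ x₂ x₃ : Bool) : (rho32 x₁ x₂ x₃ * (I2 ⊗ₖ I2)).trace = 1 := by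
  cases x₁ <;> cases x₂ <;> cases x₃ <;>
    (simp [rho32, sgn, Matrix.mul_add, Matrix.add_mul, Matrix.mul_sub, Matrix.sub_mul,
       Matrix.mul_smul, Matrix.smul_mul, Matrix.trace_add, Matrix.trace_sub, Matrix.trace_smul,
       ← Matrix.mul_kronecker_mul, Matrix.trace_kronecker, smul_eq_mul]
     ring)

set_option maxHeartbeats 1000000 in
private lemma trX (x₁ x₂ x₃ : Bool) :
    (rho32 x₁ x₂ x₃ * Xp).trace = sgn x₁ * ((1:ℂ)/(Real.sqrt 6 : ℂ)) := by
  cases x₁ <;> cases x₂ <;> cases x₃ <;>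
    (simp [rho32, Xp, sgn, Matrix.mul_add, Matrix.add_mul, Matrix.mul_sub, Matrix.sub_mul,
       Matrix.mul_smul, Matrix.smul_mul, Matrix.trace_add, Matrix.trace_sub, Matrix.trace_smul,
       ← Matrix.mul_kronecker_mul, Matrix.trace_kronecker, smul_eq_mul]
     ring)

set_option maxHeartbeats 1000000 in
private lemma trY (x₁ x₂ x₃ : Bool) :
    (rho32 x₁ x₂ x₃ * Yp).trace = sgn x₂ * ((1:ℂ)/(Real.sqrt 6 : ℂ)) := by
  cases x₁ <;> cases x₂ <;> cases x₃ <;>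
    (simp [rho32, Yp, sgn, Matrix.mul_add, Matrix.add_mul, Matrix.mul_sub, Matrix.sub_mul,
       Matrix.mul_smul, Matrix.smul_mul, Matrix.trace_add, Matrix.trace_sub, Matrix.trace_smul,
       ← Matrix.mul_kronecker_mul, Matrix.trace_kronecker, smul_eq_mul]
     ring)

set_option maxHeartbeats 1000000 in
private lemma trZ (x₁ x₂ x₃ : Bool) :
    (rho32 x₁ x₂ x₃ * Zp).trace = sgn x₃ * ((1:ℂ)/(Real.sqrt 6 : ℂ)) := by
  cases x₁ <;> cases x₂ <;> cases x₃ <;>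
    (simp [rho32, Zp, sgn, Matrix.mul_add, Matrix.add_mul, Matrix.mul_sub, Matrix.sub_mul,
       Matrix.mul_smul, Matrix.smul_mul, Matrix.trace_add, Matrix.trace_sub, Matrix.trace_smul,
       ← Matrix.mul_kronecker_mul, Matrix.trace_kronecker, smul_eq_mul]
     ring)

private lemma sum8 (f : Bool × Bool × Bool → Matrix (Fin 2 × Fin 2) (Fin 2 × Fin 2) ℂ) :
    ∑ x : Bool × Bool × Bool, f x =
      f (false, false, false) + f (false, false, true) + f (false, true, false) +
      f (false, true, true) + f (true, false, false) + f (true, false, true) +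
      f (true, true, false) + f (true, true, true) := by
  simp [Fintype.sum_prod_type, Fintype.sum_bool]
  abel

set_option maxHeartbeats 4000000 in
theorem Phi'_action :
    Phi' (I2 ⊗ₖ I2) = I2 ⊗ₖ I2 ∧
    Phi' Xp = ((2 : ℂ)/3) • Xp ∧ Phi' Yp = ((2 : ℂ)/3) • Yp ∧
    Phi' Zp = ((2 : ℂ)/3) • Zp := by
  refine ⟨?_, ?_, ?_, ?_⟩
  · rw [Phi', sum8]; simp only [trI]; simp [rho32, sgn]; module
  · rw [Phi', sum8]; simp only [trX]; simp [rho32, Xp, sgn]; module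
  · rw [Phi', sum8]; simp only [trY]; simp [rho32, Yp, sgn]; module
  · rw [Phi', sum8]; simp only [trZ]; simp [rho32, Zp, sgn]; module
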